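/- arXiv:0801.2913 — 3 statements merged into one kernel-verified Lean document; each statement's English description precedes it below -/
import Mathlib

section
/- Let z1, z2, z3 be complex numbers, let r1² = 1 + |z1|² + |z3 − z1·z2|² and r2² = 1 + |z2|² + |z3|². Then the 3×3 complex matrix û with rows (1/r1, −z̄1/r1, −(z̄3 − z̄1 z̄2)/r1), ((z1(1+|z2|²) − z3 z̄2)/(r1 r2), (1+|z3|² − z1 z2 z̄3)/(r1 r2), −(z̄2 + z1 z̄3)/(r1 r2)), (z3/r2, z2/r2, 1/r2) is unitary, i.e. û·û* = I. -/
open Complex Matrix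

open ComplexConjugate

/-! The first and last rows of `û` are, up to the factors `1/r₁` and `1/r₂`, the orthogonal
vectors `a = (1, -z̄₁, -(z̄₃ - z̄₁z̄₂))` and `b = (z₃, z₂, 1)` of squared lengths `r₁²` and `r₂²`;
the middle row is the conjugated cross product of the normalized `b` and `a`. By the Lagrange
identity `(ū × v̄) ⬝ (u × v) = |u|²|v|² - |⟨u, v⟩|²` the conjugated cross product of two
orthonormal vectors is again a unit vector, orthogonal to both. -/

theorem Matrix.star_cross {R : Type*} [CommRing R] [StarRing R] (u v : Fin 3 → R) :
    star (u ⨯₃ v) = star u ⨯₃ star v := by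
  ext i
  fin_cases i <;> simp [cross_apply, mul_comm]

theorem Matrix.mul_conjTranspose_eq_one_of_orthonormal_cross {R : Type*} [CommRing R] [StarRing R]
    {a b : Fin 3 → R} (ha : a ⬝ᵥ star a = 1) (hb : b ⬝ᵥ star b = 1) (hab : a ⬝ᵥ star b = 0) :
    of ![a, star (b ⨯₃ a), b] * (of ![a, star (b ⨯₃ a), b])ᴴ = 1 := by
  have hba : b ⬝ᵥ star a = 0 := by rw [dotProduct_star, hab, star_zero]
  have hcc : star (b ⨯₃ a) ⬝ᵥ b ⨯₃ a = 1 := by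
    rw [star_cross, cross_dot_cross, dotProduct_comm (star b), dotProduct_comm (star a),
      dotProduct_comm (star b) a, dotProduct_comm (star a) b, ha, hb, hab, hba]
    simp
  ext i j
  change ![a, star (b ⨯₃ a), b] i ⬝ᵥ star (![a, star (b ⨯₃ a), b] j) =
    (1 : Matrix (Fin 3) (Fin 3) R) i j
  fin_cases i <;> fin_cases j <;>
    simp [star_dotProduct_star, ha, hb, hab, hba, hcc, dot_self_cross, dot_cross_self]

theorem Matrix.inv_smul_dotProduct_star_inv_smul_self_of_eq_sqrt {𝕜 n : Type*} [RCLike 𝕜]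
    [Fintype n] {v : n → 𝕜} {r s : ℝ} (hr : r = √s) (hs : 0 < s) (hv : v ⬝ᵥ star v = s) :
    ((r : 𝕜)⁻¹ • v) ⬝ᵥ star ((r : 𝕜)⁻¹ • v) = 1 := by
  have hr0 : (r : 𝕜) ≠ 0 := by exact_mod_cast hr ▸ (Real.sqrt_pos.mpr hs).ne'
  have hr_sq : (r : 𝕜) ^ 2 = s := by exact_mod_cast hr ▸ Real.sq_sqrt hs.le
  simp only [star_smul, RCLike.star_def, map_inv₀, RCLike.conj_ofReal, smul_dotProduct,
    dotProduct_smul, hv, ← hr_sq, smul_eq_mul]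
  field_simp

theorem su3_dressing_matrix_unitary (z1 z2 z3 : ℂ)
    (r1 r2 : ℝ)
    (hr1 : r1 = Real.sqrt (1 + normSq z1 + normSq (z3 - z1 * z2)))
    (hr2 : r2 = Real.sqrt (1 + normSq z2 + normSq z3)) :
    let u : Matrix (Fin 3) (Fin 3) ℂ :=
      !![1 / r1, -(starRingEnd ℂ) z1 / r1,
          -((starRingEnd ℂ) z3 - (starRingEnd ℂ) z1 * (starRingEnd ℂ) z2) / r1;
        (z1 * (1 + normSq z2) - z3 * (starRingEnd ℂ) z2) / (r1 * r2),
          (1 + normSq z3 - z1 * z2 * (starRingEnd ℂ) z3) / (r1 * r2),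
          -((starRingEnd ℂ) z2 + z1 * (starRingEnd ℂ) z3) / (r1 * r2);
        z3 / r2, z2 / r2, 1 / r2]
    u * uᴴ = 1 := by
  intro u
  set a : Fin 3 → ℂ := ![1, -conj z1, -(conj z3 - conj z1 * conj z2)]
  set b : Fin 3 → ℂ := ![z3, z2, 1]
  have ha : a ⬝ᵥ star a = ↑(1 + normSq z1 + normSq (z3 - z1 * z2)) := by
    simp only [a, dotProduct, Fin.sum_univ_three, Pi.star_apply, RCLike.star_def, cons_val_zero,
      cons_val_one, cons_val, map_one, map_neg, map_sub, map_mul, conj_conj, ofReal_add, ofReal_one,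
      ← mul_conj]
    ring
  have hb : b ⬝ᵥ star b = ↑(1 + normSq z2 + normSq z3) := by
    simp only [b, dotProduct, Fin.sum_univ_three, Pi.star_apply, RCLike.star_def, cons_val_zero,
      cons_val_one, cons_val, map_one, ofReal_add, ofReal_one, ← mul_conj]
    ring
  have hab : a ⬝ᵥ star b = 0 := by
    simp only [a, b, dotProduct, Fin.sum_univ_three, Pi.star_apply, RCLike.star_def, cons_val_zero,
      cons_val_one, cons_val, map_one]
    ring
  have hu :
      u = of ![(r1 : ℂ)⁻¹ • a, star (((r2 : ℂ)⁻¹ • b) ⨯₃ ((r1 : ℂ)⁻¹ • a)), (r2 : ℂ)⁻¹ • b] := by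
    ext i j
    fin_cases i <;> fin_cases j <;>
      simp only [u, a, b, Fin.zero_eta, Fin.mk_one, Fin.reduceFinMk, of_apply, cons_val_zero,
        cons_val_one, cons_val, Pi.smul_apply, Pi.star_apply, cross_apply, smul_eq_mul,
        RCLike.star_def, map_sub, map_mul, map_neg, map_inv₀, map_one, conj_ofReal, conj_conj,
        ← mul_conj] <;> ring
  have hs1 : 0 < 1 + normSq z1 + normSq (z3 - z1 * z2) := by
    linarith [normSq_nonneg z1, normSq_nonneg (z3 - z1 * z2)]
  have hs2 : 0 < 1 + normSq z2 + normSq z3 := by linarith [normSq_nonneg z2, normSq_nonneg z3]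
  rw [hu]
  exact mul_conjTranspose_eq_one_of_orthonormal_cross
    (inv_smul_dotProduct_star_inv_smul_self_of_eq_sqrt hr1 hs1 ha)
    (inv_smul_dotProduct_star_inv_smul_self_of_eq_sqrt hr2 hs2 hb) (by simp [hab])
end

section
/- Let z1, z2, z3 ∈ ℂ, and set r1² = 1 + |z1|² + |z3 − z1 z2|², r2² = 1 + |z2|² + |z3|², n1 = (z̄1(1+|z2|²) − z2 z̄3)/r1², n2 = (z̄2 + z1 z̄3)/r2², n3 = z̄3/r2². Let ẑ be the lower unitriangular matrix with subdiagonal entries z1, z2 and corner entry z3, let n̂ be the upper unitriangular matrix with entries n1, n3, n2, and let â = diag(1/r1, r1/r2, r2). Then ẑ·ẑ* = n̂·â²·n̂*. -/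
/-!
For any field, a product `L U` of a lower and an upper unitriangular `3 × 3` matrix factors as
`U' D L'` (upper unitriangular, diagonal, lower unitriangular) once its trailing `1 × 1` and
`2 × 2` principal minors `B` and `A` are nonzero; then `D = diag(1/A, A/B, B)` and the entries of
`U'`, `L'` are explicit rational functions, checked by clearing denominators. For `U = ẑ*` the
minors are `r₂²` and `r₁²`, `U'` is `n̂`, and `L' = n̂*`.
-/

open Complex Matrix

section Unitriangular

variable {R : Type*}

def lowerUnitriangular [Zero R] [One R] (a b c : R) : Matrix (Fin 3) (Fin 3) R :=
  !![1, 0, 0; a, 1, 0; c, b, 1]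

def upperUnitriangular [Zero R] [One R] (a b c : R) : Matrix (Fin 3) (Fin 3) R :=
  !![1, a, c; 0, 1, b; 0, 0, 1]

theorem conjTranspose_lowerUnitriangular [Semiring R] [StarRing R] (a b c : R) :
    (lowerUnitriangular a b c)ᴴ = upperUnitriangular (star a) (star b) (star c) := by
  ext i j; fin_cases i <;> fin_cases j <;> simp [lowerUnitriangular, upperUnitriangular]

theorem conjTranspose_upperUnitriangular [Semiring R] [StarRing R] (a b c : R) :
    (upperUnitriangular a b c)ᴴ = lowerUnitriangular (star a) (star b) (star c) := by
  ext i j; fin_cases i <;> fin_cases j <;> simp [lowerUnitriangular, upperUnitriangular]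

theorem lowerUnitriangular_mul_upperUnitriangular {K : Type*} [Field K]
    (z1 z2 z3 w1 w2 w3 A B : K)
    (hA : A = 1 + z1 * w1 + (z3 - z1 * z2) * (w3 - w1 * w2)) (hB : B = 1 + z2 * w2 + z3 * w3)
    (hA0 : A ≠ 0) (hB0 : B ≠ 0) :
    lowerUnitriangular z1 z2 z3 * upperUnitriangular w1 w2 w3 =
      upperUnitriangular ((w1 * (1 + z2 * w2) - z2 * w3) / A) ((w2 + z1 * w3) / B) (w3 / B) *
        diagonal ![1 / A, A / B, B] *
        lowerUnitriangular ((z1 * (1 + w2 * z2) - w2 * z3) / A) ((z2 + w1 * z3) / B) (z3 / B) := by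
  ext i j
  simp only [mul_apply, Fin.sum_univ_three]
  fin_cases i <;> fin_cases j <;> simp [lowerUnitriangular, upperUnitriangular] <;>
    field_simp <;> subst hA hB <;> ring

end Unitriangular

open ComplexConjugate

theorem one_add_normSq_add_normSq_pos (z w : ℂ) : 0 < 1 + normSq z + normSq w := by
  linarith [normSq_nonneg z, normSq_nonneg w]

theorem ofReal_sqrt_one_add_normSq_add_normSq_sq (z w : ℂ) :
    ((√(1 + normSq z + normSq w) : ℝ) : ℂ) ^ 2 = 1 + z * conj z + w * conj w := by
  rw [← ofReal_pow, Real.sq_sqrt (one_add_normSq_add_normSq_pos z w).le]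
  push_cast [mul_conj]
  ring

theorem ofReal_sqrt_one_add_normSq_add_normSq_ne_zero (z w : ℂ) :
    ((√(1 + normSq z + normSq w) : ℝ) : ℂ) ≠ 0 :=
  ofReal_ne_zero.mpr (Real.sqrt_pos.mpr (one_add_normSq_add_normSq_pos z w)).ne'

theorem su3_iwasawa_key_identity (z1 z2 z3 : ℂ)
    (r1 r2 : ℝ)
    (hr1 : r1 = Real.sqrt (1 + normSq z1 + normSq (z3 - z1 * z2)))
    (hr2 : r2 = Real.sqrt (1 + normSq z2 + normSq z3))
    (n1 n2 n3 : ℂ)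
    (hn1 : n1 = ((starRingEnd ℂ) z1 * (1 + normSq z2) - z2 * (starRingEnd ℂ) z3) / r1 ^ 2)
    (hn2 : n2 = ((starRingEnd ℂ) z2 + z1 * (starRingEnd ℂ) z3) / r2 ^ 2)
    (hn3 : n3 = (starRingEnd ℂ) z3 / r2 ^ 2) :
    let zhat : Matrix (Fin 3) (Fin 3) ℂ := !![1, 0, 0; z1, 1, 0; z3, z2, 1]
    let nhat : Matrix (Fin 3) (Fin 3) ℂ := !![1, n1, n3; 0, 1, n2; 0, 0, 1]
    let ahat : Matrix (Fin 3) (Fin 3) ℂ :=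
      Matrix.diagonal ![(1 / r1 : ℂ), (r1 / r2 : ℂ), (r2 : ℂ)]
    zhat * zhatᴴ = nhat * (ahat * ahat) * nhatᴴ := by
  intro zhat nhat ahat
  have hA : (r1 : ℂ) ^ 2 = 1 + z1 * conj z1 + (z3 - z1 * z2) * (conj z3 - conj z1 * conj z2) := by
    rw [hr1, ofReal_sqrt_one_add_normSq_add_normSq_sq, map_sub, map_mul]
  have hB : (r2 : ℂ) ^ 2 = 1 + z2 * conj z2 + z3 * conj z3 := by
    rw [hr2, ofReal_sqrt_one_add_normSq_add_normSq_sq]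
  have hr1_ne : (r1 : ℂ) ≠ 0 := hr1 ▸ ofReal_sqrt_one_add_normSq_add_normSq_ne_zero _ _
  have hr2_ne : (r2 : ℂ) ≠ 0 := hr2 ▸ ofReal_sqrt_one_add_normSq_add_normSq_ne_zero _ _
  have ha : ahat * ahat =
      diagonal ![1 / (r1 : ℂ) ^ 2, (r1 : ℂ) ^ 2 / (r2 : ℂ) ^ 2, (r2 : ℂ) ^ 2] := by
    rw [diagonal_mul_diagonal]
    congr 1
    ext i; fin_cases i <;> simp <;> ring
  have hn : nhat =
      upperUnitriangular ((conj z1 * (1 + z2 * conj z2) - z2 * conj z3) / (r1 : ℂ) ^ 2)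
        ((conj z2 + z1 * conj z3) / (r2 : ℂ) ^ 2) (conj z3 / (r2 : ℂ) ^ 2) := by
    rw [show nhat = upperUnitriangular n1 n2 n3 from rfl, hn1, hn2, hn3, ← mul_conj]
  have hnH : nhatᴴ =
      lowerUnitriangular ((z1 * (1 + conj z2 * z2) - conj z2 * z3) / (r1 : ℂ) ^ 2)
        ((z2 + conj z1 * z3) / (r2 : ℂ) ^ 2) (z3 / (r2 : ℂ) ^ 2) := by
    rw [hn, conjTranspose_upperUnitriangular]
    simp [← ofReal_pow]
  rw [show zhatᴴ = _ from conjTranspose_lowerUnitriangular z1 z2 z3, ha, hnH, hn]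
  exact lowerUnitriangular_mul_upperUnitriangular _ _ _ _ _ _ _ _ hA hB
    (pow_ne_zero 2 hr1_ne) (pow_ne_zero 2 hr2_ne)
end

section
/- Fix real ξ, η and complex z1, z2, z3, and define μ1,…,μ8 by the generalized stereographic projection formulas: with r1² = 1+|z1|²+|z3−z1z2|², r2² = 1+|z2|²+|z3|², μ1 = −(η/r2²)(z̄2 z3 + z2 z̄3) − (ξ/r1²)(z1 + z̄1), μ2 = i(η/r2²)(z̄2 z3 − z2 z̄3) + i(ξ/r1²)(z1 − z̄1), μ3 = (η/r2²)(|z2|²−|z3|²) + (ξ/r1²)(1−|z1|²), μ4 = −(η/r2²)(z3+z̄3) − (ξ/r1²)(z3−z1z2 + z̄3−z̄1z̄2), μ5 = i(η/r2²)(z3−z̄3) + i(ξ/r1²)((z3−z1z2) − (z̄3−z̄1z̄2)), μ6 = −(η/r2²)(z2+z̄2) + (ξ/r1²)(z̄1(z3−z1z2) + z1(z̄3−z̄1z̄2)), μ7 = i(η/r2²)(z2−z̄2) − i(ξ/r1²)(z̄1(z3−z1z2) − z1(z̄3−z̄1z̄2)), √3·μ8 = (η/r2²)(2−|z2|²−|z3|²)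 + (ξ/r1²)(1+|z1|²−2|z3−z1z2|²). Then Σ_{a=1}^{8} μ_a² = (4/3)(ξ² + ξη + η²), independently of z1, z2, z3. -/
open Complex

noncomputable section

def R1sq (z1 z2 z3 : ℂ) : ℝ := 1 + normSq z1 + normSq (z3 - z1 * z2)
def R2sq (z2 z3 : ℂ) : ℝ := 1 + normSq z2 + normSq z3

def mu1 (ξ η : ℝ) (z1 z2 z3 : ℂ) : ℂ :=
  -(η / R2sq z2 z3) * ((starRingEnd ℂ) z2 * z3 + z2 * (starRingEnd ℂ) z3)
    - (ξ / R1sq z1 z2 z3) * (z1 + (starRingEnd ℂ) z1)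

def mu2 (ξ η : ℝ) (z1 z2 z3 : ℂ) : ℂ :=
  Complex.I * (η / R2sq z2 z3) * ((starRingEnd ℂ) z2 * z3 - z2 * (starRingEnd ℂ) z3)
    + Complex.I * (ξ / R1sq z1 z2 z3) * (z1 - (starRingEnd ℂ) z1)

def mu3 (ξ η : ℝ) (z1 z2 z3 : ℂ) : ℂ :=
  (η / R2sq z2 z3) * (normSq z2 - normSq z3)
    + (ξ / R1sq z1 z2 z3) * (1 - normSq z1)

def mu4 (ξ η : ℝ) (z1 z2 z3 : ℂ) : ℂ :=
  -(η / R2sq z2 z3) * (z3 + (starRingEnd ℂ) z3)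
    - (ξ / R1sq z1 z2 z3) *
      (z3 - z1 * z2 + (starRingEnd ℂ) z3 - (starRingEnd ℂ) z1 * (starRingEnd ℂ) z2)

def mu5 (ξ η : ℝ) (z1 z2 z3 : ℂ) : ℂ :=
  Complex.I * (η / R2sq z2 z3) * (z3 - (starRingEnd ℂ) z3)
    + Complex.I * (ξ / R1sq z1 z2 z3) *
      ((z3 - z1 * z2) - ((starRingEnd ℂ) z3 - (starRingEnd ℂ) z1 * (starRingEnd ℂ) z2))

def mu6 (ξ η : ℝ) (z1 z2 z3 : ℂ) : ℂ :=
  -(η / R2sq z2 z3) * (z2 + (starRingEnd ℂ) z2)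
    + (ξ / R1sq z1 z2 z3) *
      ((starRingEnd ℂ) z1 * (z3 - z1 * z2)
        + z1 * ((starRingEnd ℂ) z3 - (starRingEnd ℂ) z1 * (starRingEnd ℂ) z2))

def mu7 (ξ η : ℝ) (z1 z2 z3 : ℂ) : ℂ :=
  Complex.I * (η / R2sq z2 z3) * (z2 - (starRingEnd ℂ) z2)
    - Complex.I * (ξ / R1sq z1 z2 z3) *
      ((starRingEnd ℂ) z1 * (z3 - z1 * z2)
        - z1 * ((starRingEnd ℂ) z3 - (starRingEnd ℂ) z1 * (starRingEnd ℂ) z2))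

def mu8 (ξ η : ℝ) (z1 z2 z3 : ℂ) : ℂ :=
  ((η / R2sq z2 z3) * (2 - normSq z2 - normSq z3)
    + (ξ / R1sq z1 z2 z3) * (1 + normSq z1 - 2 * normSq (z3 - z1 * z2)))
    / (Real.sqrt 3 : ℂ)

end

/-!
Each `μ_a` is `(η / r₂²) P_a + (ξ / r₁²) Q_a` with `P`, `Q` polynomial in `z, z̄`: up to the factors
`r₂²`, `r₁²`, they are the Gell-Mann coordinates of the traceless parts of the projectors onto two
orthogonal lines of `ℂ³`, the images under the dressing element of the pieces of `μ₀` along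
`diag(1,1,-2)` and `diag(2,-1,-1)`. The Casimir is a quadratic form, and for such projectors it gives
`P·P = 4/3 r₂⁴`, `Q·Q = 4/3 r₁⁴`, `P·Q = 2/3 r₁² r₂²`; the factors `r₁², r₂²` then cancel.
-/
open ComplexConjugate Matrix

lemma dotProduct_smul_add_smul_self {ι R : Type*} [Fintype ι] [CommRing R] (a b : R)
    (u v : ι → R) :
    (a • u + b • v) ⬝ᵥ (a • u + b • v) =
      a ^ 2 * (u ⬝ᵥ u) + 2 * a * b * (u ⬝ᵥ v) + b ^ 2 * (v ⬝ᵥ v) := by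
  simp only [add_dotProduct, dotProduct_add, smul_dotProduct, dotProduct_smul, smul_eq_mul,
    dotProduct_comm v u]
  ring

lemma R1sq_pos (z1 z2 z3 : ℂ) : 0 < R1sq z1 z2 z3 :=
  add_pos_of_pos_of_nonneg (add_pos_of_pos_of_nonneg one_pos (normSq_nonneg _)) (normSq_nonneg _)

lemma R2sq_pos (z2 z3 : ℂ) : 0 < R2sq z2 z3 :=
  add_pos_of_pos_of_nonneg (add_pos_of_pos_of_nonneg one_pos (normSq_nonneg _)) (normSq_nonneg _)

lemma inv_ofReal_sqrt_three_sq : (Real.sqrt 3 : ℂ)⁻¹ ^ 2 = 1 / 3 := by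
  rw [inv_pow, ← ofReal_pow, Real.sq_sqrt (by norm_num)]
  norm_num

noncomputable def etaComponents (z2 z3 : ℂ) : Fin 8 → ℂ :=
  ![-(conj z2 * z3 + z2 * conj z3), I * (conj z2 * z3 - z2 * conj z3), normSq z2 - normSq z3,
    -(z3 + conj z3), I * (z3 - conj z3), -(z2 + conj z2), I * (z2 - conj z2),
    (2 - normSq z2 - normSq z3) / (Real.sqrt 3 : ℂ)]

noncomputable def xiComponents (z1 z2 z3 : ℂ) : Fin 8 → ℂ :=
  ![-(z1 + conj z1), I * (z1 - conj z1), 1 - normSq z1,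
    -(z3 - z1 * z2 + conj (z3 - z1 * z2)), I * (z3 - z1 * z2 - conj (z3 - z1 * z2)),
    conj z1 * (z3 - z1 * z2) + z1 * conj (z3 - z1 * z2),
    -I * (conj z1 * (z3 - z1 * z2) - z1 * conj (z3 - z1 * z2)),
    (1 + normSq z1 - 2 * normSq (z3 - z1 * z2)) / (Real.sqrt 3 : ℂ)]

lemma etaComponents_dotProduct_self (z2 z3 : ℂ) :
    etaComponents z2 z3 ⬝ᵥ etaComponents z2 z3 = 4 / 3 * (R2sq z2 z3 : ℂ) ^ 2 := by
  simp only [etaComponents, R2sq, dotProduct, Fin.sum_univ_eight, cons_val]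
  push_cast
  simp only [← mul_conj]
  ring_nf
  simp only [I_sq, inv_ofReal_sqrt_three_sq]
  ring

lemma xiComponents_dotProduct_self (z1 z2 z3 : ℂ) :
    xiComponents z1 z2 z3 ⬝ᵥ xiComponents z1 z2 z3 = 4 / 3 * (R1sq z1 z2 z3 : ℂ) ^ 2 := by
  simp only [xiComponents, R1sq, dotProduct, Fin.sum_univ_eight, cons_val]
  push_cast
  simp only [← mul_conj]
  ring_nf
  simp only [I_sq, inv_ofReal_sqrt_three_sq]
  ring

lemma etaComponents_dotProduct_xiComponents (z1 z2 z3 : ℂ) :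
    etaComponents z2 z3 ⬝ᵥ xiComponents z1 z2 z3 =
      2 / 3 * (R2sq z2 z3 * R1sq z1 z2 z3 : ℂ) := by
  simp only [etaComponents, xiComponents, R1sq, R2sq, dotProduct, Fin.sum_univ_eight, cons_val]
  push_cast
  simp only [← mul_conj, map_sub, map_mul]
  ring_nf
  simp only [I_sq, inv_ofReal_sqrt_three_sq]
  ring

lemma mu_eq_smul_add_smul (ξ η : ℝ) (z1 z2 z3 : ℂ) :
    ![mu1 ξ η z1 z2 z3, mu2 ξ η z1 z2 z3, mu3 ξ η z1 z2 z3, mu4 ξ η z1 z2 z3,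
        mu5 ξ η z1 z2 z3, mu6 ξ η z1 z2 z3, mu7 ξ η z1 z2 z3, mu8 ξ η z1 z2 z3] =
      (η / R2sq z2 z3 : ℂ) • etaComponents z2 z3 +
        (ξ / R1sq z1 z2 z3 : ℂ) • xiComponents z1 z2 z3 := by
  ext k
  fin_cases k <;>
    simp only [mu1, mu2, mu3, mu4, mu5, mu6, mu7, mu8, etaComponents, xiComponents, Pi.add_apply,
      Pi.smul_apply, smul_eq_mul, Fin.reduceFinMk, Fin.zero_eta, Fin.mk_one, cons_val, cons_val_zero,
      cons_val_one, map_sub, map_mul] <;> ring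

theorem su3_casimir_invariant (ξ η : ℝ) (z1 z2 z3 : ℂ) :
    mu1 ξ η z1 z2 z3 ^ 2 + mu2 ξ η z1 z2 z3 ^ 2 + mu3 ξ η z1 z2 z3 ^ 2 +
    mu4 ξ η z1 z2 z3 ^ 2 + mu5 ξ η z1 z2 z3 ^ 2 + mu6 ξ η z1 z2 z3 ^ 2 +
    mu7 ξ η z1 z2 z3 ^ 2 + mu8 ξ η z1 z2 z3 ^ 2 =
      ((4 / 3 : ℝ) * (ξ ^ 2 + ξ * η + η ^ 2) : ℝ) := by
  set B : ℂ := η / R2sq z2 z3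
  set A : ℂ := ξ / R1sq z1 z2 z3
  have hB : B * R2sq z2 z3 = η := div_mul_cancel₀ _ (ofReal_ne_zero.2 (R2sq_pos z2 z3).ne')
  have hA : A * R1sq z1 z2 z3 = ξ := div_mul_cancel₀ _ (ofReal_ne_zero.2 (R1sq_pos z1 z2 z3).ne')
  calc _ = (B • etaComponents z2 z3 + A • xiComponents z1 z2 z3) ⬝ᵥ
        (B • etaComponents z2 z3 + A • xiComponents z1 z2 z3) := by
        rw [← mu_eq_smul_add_smul]
        simp [dotProduct, Fin.sum_univ_eight, sq]
    _ = 4 / 3 * ((A * R1sq z1 z2 z3) ^ 2 + (A * R1sq z1 z2 z3) * (B * R2sq z2 z3) +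
          (B * R2sq z2 z3) ^ 2) := by
        rw [dotProduct_smul_add_smul_self, etaComponents_dotProduct_self,
          xiComponents_dotProduct_self, etaComponents_dotProduct_xiComponents]
        ring
    _ = _ := by
        rw [hA, hB]
        push_cast
        ring
end
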